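/- arXiv:math/0101103 — 2 statements merged into one kernel-verified Lean document; each statement's English description precedes it below -/
import Mathlib

section
/- For every open set V ⊆ ℝⁿ there exist a natural number m and open sets U₁, …, U_m contained in V with V = U₁ ∪ ⋯ ∪ U_m, such that each U_i is the union of a family of pairwise disjoint open axis-parallel cubes. (This is the decomposition, derived from Whitney's lemma, used in the proof of Theorem 2.1.) -/
/-!
Let `d` be a `1`-Lipschitz function with `V = {d > 0}` (the distance to `Vᶜ`, or `1` if `V` is
everything). Keep the cubes of side `2ᵏ` from a grid whose cells each lie in the shell
`2ᵏ < d < 2ᵏ⁺³`. A point with `2ᵏ⁺¹ < d x ≤ 2ᵏ⁺²` lies in such a cell as soon as no coordinate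
sits on a grid line; shifting the grid by half a cell in the bad coordinates arranges this, so
`2ⁿ` grids suffice. Cells of one grid and one scale are disjoint, and shells whose scales differ
by at least `3` are disjoint, so sorting the cells by grid and by the scale modulo `3` gives
`3 · 2ⁿ` disjoint families covering `V`.
-/

open Set

/-- An open axis-parallel cube in `ℝⁿ`: a product of intervals `(a j, a j + s)` with a common
side length `s > 0`. -/
def IsOpenCube {n : ℕ} (c : Set (Fin n → ℝ)) : Prop :=
  ∃ (a : Fin n → ℝ) (s : ℝ), 0 < s ∧ c = Set.univ.pi fun j => Set.Ioo (a j) (a j + s)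

theorem IsOpen.exists_lipschitzWith_one_setOf_pos_eq {X : Type*} [PseudoMetricSpace X]
    {V : Set X} (hV : IsOpen V) : ∃ d : X → ℝ, LipschitzWith 1 d ∧ {x | 0 < d x} = V := by
  rcases Vᶜ.eq_empty_or_nonempty with hempty | hne
  · refine ⟨fun _ => 1, LipschitzWith.const' 1, ?_⟩
    simp [compl_empty_iff.mp hempty]
  · refine ⟨fun x => Metric.infDist x Vᶜ, Metric.lipschitz_infDist_pt _, Set.ext fun x => ?_⟩
    rw [mem_ofPred_eq, ← hV.isClosed_compl.notMem_iff_infDist_pos hne, notMem_compl_iff]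

section WhitneyCubes

noncomputable def halfShift (b : Bool) : ℝ := if b then 1 / 2 else 0

variable {n : ℕ}

def gridCube (t : ℝ) (o : Fin n → Bool) (m : Fin n → ℤ) : Set (Fin n → ℝ) :=
  univ.pi fun j => Ioo (t * (m j + halfShift (o j))) (t * (m j + halfShift (o j)) + t)

theorem isOpenCube_gridCube {t : ℝ} (ht : 0 < t) (o : Fin n → Bool) (m : Fin n → ℤ) :
    IsOpenCube (gridCube t o m) :=
  ⟨_, t, ht, rfl⟩

theorem disjoint_gridCube {t : ℝ} (o : Fin n → Bool) {m m' : Fin n → ℤ} (h : m ≠ m') :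
    Disjoint (gridCube t o m) (gridCube t o m') := by
  obtain ⟨j, hj⟩ := Function.ne_iff.mp h
  rw [disjoint_left]
  intro y hy hy'
  obtain ⟨h₁, h₂⟩ := hy j trivial
  obtain ⟨h₁', h₂'⟩ := hy' j trivial
  have ht : 0 < t := by nlinarith
  rcases hj.lt_or_gt with hlt | hlt
  · have : (m j : ℝ) + 1 ≤ m' j := by exact_mod_cast hlt
    nlinarith
  · have : (m' j : ℝ) + 1 ≤ m j := by exact_mod_cast hlt
    nlinarith

theorem dist_le_of_mem_gridCube {t : ℝ} (ht : 0 ≤ t) {o : Fin n → Bool} {m : Fin n → ℤ}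
    {x y : Fin n → ℝ} (hx : x ∈ gridCube t o m) (hy : y ∈ gridCube t o m) : dist x y ≤ t := by
  refine (dist_pi_le_iff ht).mpr fun j => ?_
  obtain ⟨hx₁, hx₂⟩ := hx j trivial
  obtain ⟨hy₁, hy₂⟩ := hy j trivial
  rw [Real.dist_eq, abs_sub_le_iff]
  constructor <;> linarith

theorem exists_mem_Ioo_halfShift {t : ℝ} (ht : 0 < t) (u : ℝ) :
    ∃ (b : Bool) (m : ℤ), u ∈ Ioo (t * (m + halfShift b)) (t * (m + halfShift b) + t) := by
  by_cases hu : ∃ m : ℤ, u = t * m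
  · obtain ⟨m, rfl⟩ := hu
    refine ⟨true, m - 1, ?_⟩
    simp only [halfShift, if_true, Int.cast_sub, Int.cast_one, mem_Ioo]
    constructor <;> nlinarith
  · push Not at hu
    refine ⟨false, ⌊u / t⌋, ?_⟩
    have h₁ : (⌊u / t⌋ : ℝ) < u / t :=
      (Int.floor_le _).lt_of_ne fun h => hu ⌊u / t⌋ (by rw [h, mul_div_cancel₀ _ ht.ne'])
    have h₂ := Int.lt_floor_add_one (u / t)
    rw [lt_div_iff₀ ht] at h₁
    rw [div_lt_iff₀ ht] at h₂
    simp only [halfShift, Bool.false_eq_true, if_false, add_zero, mem_Ioo]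
    constructor <;> linarith

theorem exists_mem_gridCube {t : ℝ} (ht : 0 < t) (x : Fin n → ℝ) :
    ∃ o m, x ∈ gridCube t o m := by
  choose o m hm using fun j => exists_mem_Ioo_halfShift ht (x j)
  exact ⟨o, m, fun j _ => hm j⟩

theorem disjoint_Ioo_zpow_two {k k' : ℤ} (h : k + 3 ≤ k') :
    Disjoint (Ioo ((2 : ℝ) ^ k) (2 ^ (k + 3))) (Ioo ((2 : ℝ) ^ k') (2 ^ (k' + 3))) :=
  disjoint_left.mpr fun _ hx hx' =>
    (hx'.1.trans hx.2).not_ge (zpow_le_zpow_right₀ one_le_two h)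

theorem exists_two_mul_zpow_lt_le {a : ℝ} (ha : 0 < a) :
    ∃ k : ℤ, 2 * 2 ^ k < a ∧ a ≤ 4 * (2 : ℝ) ^ k := by
  obtain ⟨k, hk₁, hk₂⟩ := exists_mem_Ioc_zpow ha one_lt_two
  have h₁ : (2 : ℝ) ^ k = 2 * 2 ^ (k - 1) := by rw [zpow_sub_one₀ two_ne_zero]; ring
  have h₂ : (2 : ℝ) ^ (k + 1) = 4 * 2 ^ (k - 1) := by
    rw [zpow_add_one₀ two_ne_zero, zpow_sub_one₀ two_ne_zero]; ring
  exact ⟨k - 1, h₁ ▸ hk₁, h₂ ▸ hk₂⟩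

def whitneyFamily (d : (Fin n → ℝ) → ℝ) (p : ZMod 3 × (Fin n → Bool)) :
    Set (Set (Fin n → ℝ)) :=
  {c | ∃ (k : ℤ) (m : Fin n → ℤ), (k : ZMod 3) = p.1 ∧ c = gridCube (2 ^ k) p.2 m ∧
    c ⊆ d ⁻¹' Ioo (2 ^ k) (2 ^ (k + 3))}

theorem isOpenCube_of_mem_whitneyFamily {d : (Fin n → ℝ) → ℝ} {p : ZMod 3 × (Fin n → Bool)}
    {c : Set (Fin n → ℝ)} (hc : c ∈ whitneyFamily d p) : IsOpenCube c := by
  obtain ⟨k, m, -, rfl, -⟩ := hc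
  exact isOpenCube_gridCube (zpow_pos two_pos k) _ m

theorem pairwiseDisjoint_whitneyFamily (d : (Fin n → ℝ) → ℝ) (p : ZMod 3 × (Fin n → Bool)) :
    (whitneyFamily d p).PairwiseDisjoint id := by
  rintro _ ⟨k, m, hk, rfl, hc⟩ _ ⟨k', m', hk', rfl, hc'⟩ hne
  rcases eq_or_ne k k' with rfl | hkk'
  · exact disjoint_gridCube p.2 fun hm => hne (by rw [hm])
  have h3 : (3 : ℤ) ∣ k' - k :=
    (ZMod.intCast_eq_intCast_iff_dvd_sub k k' 3).mp (hk.trans hk'.symm)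
  refine Disjoint.mono hc hc' ?_
  rcases hkk'.lt_or_gt with hlt | hlt
  · exact (disjoint_Ioo_zpow_two (by omega)).preimage d
  · exact ((disjoint_Ioo_zpow_two (by omega)).preimage d).symm

theorem sUnion_whitneyFamily_subset (d : (Fin n → ℝ) → ℝ) (p : ZMod 3 × (Fin n → Bool)) :
    ⋃₀ whitneyFamily d p ⊆ {x | 0 < d x} := by
  rintro x ⟨_, ⟨k, m, -, rfl, hc⟩, hx⟩
  exact (zpow_pos two_pos k).trans (hc hx).1

theorem exists_mem_whitneyFamily {d : (Fin n → ℝ) → ℝ} (hd : LipschitzWith 1 d)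
    {x : Fin n → ℝ} (hx : 0 < d x) : ∃ p, ∃ c ∈ whitneyFamily d p, x ∈ c := by
  obtain ⟨k, hk₁, hk₂⟩ := exists_two_mul_zpow_lt_le hx
  have ht : (0 : ℝ) < 2 ^ k := zpow_pos two_pos k
  obtain ⟨o, m, hxm⟩ := exists_mem_gridCube ht x
  refine ⟨((k : ZMod 3), o), _, ⟨k, m, rfl, rfl, fun y hy => ?_⟩, hxm⟩
  have hxy := dist_le_of_mem_gridCube ht.le hxm hy
  have h₁ := hd.le_add_mul x y
  have h₂ := hd.le_add_mul y x
  rw [NNReal.coe_one, one_mul] at h₁ h₂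
  rw [dist_comm] at h₂
  have h₈ : (2 : ℝ) ^ (k + 3) = 8 * 2 ^ k := by rw [zpow_add₀ two_ne_zero]; norm_num; ring
  exact ⟨by linarith, by rw [h₈]; linarith⟩

end WhitneyCubes

/-- Every open set `V ⊆ ℝⁿ` is the union of finitely many open subsets `U₁, …, U_m` of `V`,
each of which is a union of a pairwise disjoint family of open axis-parallel cubes
(the Whitney-type decomposition used in the proof of Theorem 2.1). -/
theorem exists_whitney_decomposition {n : ℕ} (V : Set (Fin n → ℝ)) (hV : IsOpen V) :
    ∃ (m : ℕ) (U : Fin m → Set (Fin n → ℝ)),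
      (∀ i, U i ⊆ V) ∧ V = ⋃ i, U i ∧
      ∀ i, ∃ F : Set (Set (Fin n → ℝ)),
        (∀ c ∈ F, IsOpenCube c) ∧ F.PairwiseDisjoint id ∧ U i = ⋃₀ F := by
  obtain ⟨d, hd, rfl⟩ := hV.exists_lipschitzWith_one_setOf_pos_eq
  let e := (Fintype.equivFin (ZMod 3 × (Fin n → Bool))).symm
  refine ⟨_, fun i => ⋃₀ whitneyFamily d (e i), fun i => sUnion_whitneyFamily_subset d _, ?_,
    fun i => ⟨_, fun c => isOpenCube_of_mem_whitneyFamily,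
      pairwiseDisjoint_whitneyFamily d _, rfl⟩⟩
  refine (iUnion_subset fun i => sUnion_whitneyFamily_subset d _).antisymm' fun x hx => ?_
  obtain ⟨p, c, hc, hxc⟩ := exists_mem_whitneyFamily hd hx
  exact mem_iUnion_of_mem (e.symm p) (by simpa using mem_sUnion_of_mem hxc hc)
end

section
/- Every holomorphic map from the punctured plane to the punctured unit disc is constant: if f : ℂ → ℂ is complex-differentiable on {z : ℂ | z ≠ 0} and satisfies f(z) ∈ {w : ℂ | ‖w‖ < 1 ∧ w ≠ 0} for all z ≠ 0, then there is a constant c with f(z) = c for all z ≠ 0. (This is the paper's claim, via Liouville's theorem and removable singularities, that 𝒪(ℂ^×, 𝔻^×) = 𝔻^×.) -/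
/-!
Since `f` is bounded near `0`, Riemann's removable singularity theorem extends it to an entire
function. Its range is the bounded set `f(ℂ^×)` plus one point, so the extension is constant by
Liouville's theorem.
-/

open Function Filter Set Topology Bornology

namespace Complex

variable {E : Type*} [NormedAddCommGroup E] [NormedSpace ℂ E] [CompleteSpace E]

theorem differentiable_update_limUnder_of_isBounded {f : ℂ → E} {c : ℂ}
    (hd : DifferentiableOn ℂ f {c}ᶜ) (hb : IsBounded (f '' {c}ᶜ)) :
    Differentiable ℂ (update f c (limUnder (𝓝[≠] c) f)) := by
  rw [compl_eq_univ_sdiff] at hd hb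
  obtain ⟨C, hC⟩ := hb.exists_norm_le
  have hbdd : BddAbove (norm ∘ f '' (univ \ {c})) :=
    ⟨C, by rintro _ ⟨z, hz, rfl⟩; exact hC _ (mem_image_of_mem f hz)⟩
  exact fun z => (differentiableOn_update_limUnder_of_bddAbove univ_mem hd hbdd).differentiableAt
    univ_mem

theorem exists_eq_const_of_differentiableOn_compl_singleton_of_isBounded {f : ℂ → E} {c : ℂ}
    (hd : DifferentiableOn ℂ f {c}ᶜ) (hb : IsBounded (f '' {c}ᶜ)) :
    ∃ a, ∀ z ≠ c, f z = a := by
  set g := update f c (limUnder (𝓝[≠] c) f)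
  have hrange : range g ⊆ insert (g c) (f '' {c}ᶜ) := by
    rintro _ ⟨z, rfl⟩
    rcases eq_or_ne z c with rfl | hz
    · exact mem_insert _ _
    · exact mem_insert_of_mem _ ⟨z, hz, (update_of_ne hz _ _).symm⟩
  have hg : Differentiable ℂ g := differentiable_update_limUnder_of_isBounded hd hb
  obtain ⟨a, ha⟩ := hg.exists_const_forall_eq_of_bounded ((hb.insert _).subset hrange)
  exact ⟨a, fun z hz => (update_of_ne hz _ f).symm.trans (ha z)⟩

end Complex

/-- Every holomorphic map from the punctured plane to the punctured unit disc is constant: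
`𝒪(ℂ^×, 𝔻^×) = 𝔻^×` (via Liouville's theorem and removable singularities). -/
theorem holomorphic_puncturedPlane_to_puncturedDisc_constant (f : ℂ → ℂ)
    (hf : DifferentiableOn ℂ f {z : ℂ | z ≠ 0})
    (hmap : ∀ z : ℂ, z ≠ 0 → ‖f z‖ < 1 ∧ f z ≠ 0) :
    ∃ c : ℂ, ∀ z : ℂ, z ≠ 0 → f z = c := by
  have hb : IsBounded (f '' {0}ᶜ) :=
    isBounded_iff_forall_norm_le.2 ⟨1, by rintro _ ⟨z, hz, rfl⟩; exact (hmap z hz).1.le⟩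
  exact Complex.exists_eq_const_of_differentiableOn_compl_singleton_of_isBounded hf hb
end
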